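/- The cotangent lift of the midpoint discretization map, R_d^{T*}(q, p, q̇, ṗ) = (q − q̇/2, p − ṗ/2, q + q̇/2, p + ṗ/2), is a symplectomorphism from (T(T*ℝⁿ), d_T ω) to (T*ℝⁿ × T*ℝⁿ, Ω₁₂ = pr₂*ω − pr₁*ω). -/

import Mathlib

open scoped BigOperators

/-- Euclidean pairing on ℝⁿ. -/
def dotR (n : ℕ) (a b : Fin n → ℝ) : ℝ := ∑ i, a i * b i

/-- Tangent-lifted symplectic form `d_T ω` on `T(T*ℝⁿ) ≅ ℝ^{4n}`, coordinates
`((q,p),(q̇,ṗ))`: `d_Tω((a,b,c,d),(a',b',c',d')) = ⟨a,d'⟩ − ⟨a',d⟩ + ⟨c,b'⟩ − ⟨c',b⟩`. -/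
def dTomega (n : ℕ)
    (u w : ((Fin n → ℝ) × (Fin n → ℝ)) × ((Fin n → ℝ) × (Fin n → ℝ))) : ℝ :=
  dotR n u.1.1 w.2.2 - dotR n w.1.1 u.2.2 + dotR n u.2.1 w.1.2 - dotR n w.2.1 u.1.2

/-- `Ω₁₂ = pr₂*ω − pr₁*ω` on `T*ℝⁿ × T*ℝⁿ ≅ ℝ^{4n}`, coordinates `((q₀,p₀),(q₁,p₁))`. -/
def Omega12 (n : ℕ)
    (u w : ((Fin n → ℝ) × (Fin n → ℝ)) × ((Fin n → ℝ) × (Fin n → ℝ))) : ℝ :=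
  (dotR n u.2.1 w.2.2 - dotR n w.2.1 u.2.2) - (dotR n u.1.1 w.1.2 - dotR n w.1.1 u.1.2)

/-! On a vector space `M` (here `M = T*ℝⁿ`), the midpoint discretization
`(x, v) ↦ (x − v/2, x + v/2)` of `M × M` is a linear bijection with inverse
`(a, b) ↦ ((a + b)/2, b − a)`. For every bilinear form `B` on `M`,
`B (x + v/2) (y + w/2) − B (x − v/2) (y − w/2) = B x w + B v y`: the terms `B x y` and
`B v w / 4` cancel while the cross terms double. For `B` the canonical form `ω` of `T*ℝⁿ`
the left side is `Ω₁₂` evaluated on the images and the right side is `d_T ω`. -/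

open LinearMap

namespace LinearMap.BilinForm

variable {R M : Type*} [CommRing R] [AddCommGroup M] [Module R M]

def tangentLift (B : LinearMap.BilinForm R M) : LinearMap.BilinForm R (M × M) :=
  B.compl₁₂ (fst R M M) (snd R M M) + B.compl₁₂ (snd R M M) (fst R M M)

def sndSubFst (B : LinearMap.BilinForm R M) : LinearMap.BilinForm R (M × M) :=
  B.compl₁₂ (snd R M M) (snd R M M) - B.compl₁₂ (fst R M M) (fst R M M)

@[simp]
theorem tangentLift_apply (B : LinearMap.BilinForm R M) (u w : M × M) :
    B.tangentLift u w = B u.1 w.2 + B u.2 w.1 := rfl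

@[simp]
theorem sndSubFst_apply (B : LinearMap.BilinForm R M) (u w : M × M) :
    B.sndSubFst u w = B u.2 w.2 - B u.1 w.1 := rfl

end LinearMap.BilinForm

section Midpoint

variable (K M : Type*) [Field K] [NeZero (2 : K)] [AddCommGroup M] [Module K M]

def midpointDiscretization : (M × M) ≃ₗ[K] M × M where
  toFun u := (u.1 - (1 / 2 : K) • u.2, u.1 + (1 / 2 : K) • u.2)
  invFun z := ((1 / 2 : K) • (z.1 + z.2), z.2 - z.1)
  map_add' u w := by ext <;> simp only [Prod.fst_add, Prod.snd_add, smul_add] <;> abel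
  map_smul' c u := by ext <;> simp [smul_sub, smul_add, smul_comm c]
  left_inv u := by
    ext
    · linear_combination (norm := module) add_halves (1 : K) • u.1
    · linear_combination (norm := module) add_halves (1 : K) • u.2
  right_inv z := by
    ext
    · linear_combination (norm := module) add_halves (1 : K) • z.1
    · linear_combination (norm := module) add_halves (1 : K) • z.2

variable {K M}

@[simp]
theorem midpointDiscretization_apply (u : M × M) :
    midpointDiscretization K M u = (u.1 - (1 / 2 : K) • u.2, u.1 + (1 / 2 : K) • u.2) := rfl

theorem LinearMap.BilinForm.sndSubFst_midpointDiscretization (B : LinearMap.BilinForm K M)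
    (u w : M × M) :
    B.sndSubFst (midpointDiscretization K M u) (midpointDiscretization K M w) =
      B.tangentLift u w := by
  simp only [sndSubFst_apply, tangentLift_apply, midpointDiscretization_apply, map_add, map_sub,
    map_smul, LinearMap.add_apply, LinearMap.sub_apply, LinearMap.smul_apply, smul_eq_mul]
  linear_combination (B u.1 w.2 + B u.2 w.1) * add_halves (1 : K)

end Midpoint

section Cotangent

variable (R ι : Type*) [CommRing R] [Fintype ι]

def cotangentForm : LinearMap.BilinForm R ((ι → R) × (ι → R)) :=
  let pairing := (dotProductBilin R R).compl₁₂ (fst R (ι → R) (ι → R))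
    (snd R (ι → R) (ι → R))
  pairing - pairing.flip

@[simp]
theorem cotangentForm_apply (x y : (ι → R) × (ι → R)) :
    cotangentForm R ι x y = x.1 ⬝ᵥ y.2 - y.1 ⬝ᵥ x.2 := rfl

end Cotangent

section PhaseSpace

variable {n : ℕ} (u w : ((Fin n → ℝ) × (Fin n → ℝ)) × ((Fin n → ℝ) × (Fin n → ℝ)))

theorem dotR_eq_dotProduct (a b : Fin n → ℝ) : dotR n a b = a ⬝ᵥ b := rfl

theorem Omega12_eq_sndSubFst :
    Omega12 n u w = (cotangentForm ℝ (Fin n)).sndSubFst u w := rfl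

theorem dTomega_eq_tangentLift : dTomega n u w = (cotangentForm ℝ (Fin n)).tangentLift u w := by
  simp only [dTomega, dotR_eq_dotProduct, BilinForm.tangentLift_apply, cotangentForm_apply]
  ring

end PhaseSpace

/-- The cotangent lift of the midpoint discretization map,
`R_d^{T*}(q,p,q̇,ṗ) = (q − q̇/2, p − ṗ/2, q + q̇/2, p + ṗ/2)`, is a symplectomorphism
from `(T(T*ℝⁿ), d_Tω)` to `(T*ℝⁿ × T*ℝⁿ, Ω₁₂)`. -/
theorem midpoint_cotangent_lift_symplectomorphism (n : ℕ)
    (R : ((Fin n → ℝ) × (Fin n → ℝ)) × ((Fin n → ℝ) × (Fin n → ℝ)) →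
      ((Fin n → ℝ) × (Fin n → ℝ)) × ((Fin n → ℝ) × (Fin n → ℝ)))
    (hR : ∀ q p qd pd, R ((q, p), (qd, pd)) =
      ((q - (1 / 2 : ℝ) • qd, p - (1 / 2 : ℝ) • pd),
       (q + (1 / 2 : ℝ) • qd, p + (1 / 2 : ℝ) • pd))) :
    IsLinearMap ℝ R ∧ Function.Bijective R ∧
    ∀ u w, Omega12 n (R u) (R w) = dTomega n u w := by
  obtain rfl : R = midpointDiscretization ℝ ((Fin n → ℝ) × (Fin n → ℝ)) :=
    funext fun ⟨⟨q, p⟩, ⟨qd, pd⟩⟩ => hR q p qd pd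
  refine ⟨LinearMap.isLinear _, LinearEquiv.bijective _, fun u w => ?_⟩
  rw [Omega12_eq_sndSubFst, dTomega_eq_tangentLift,
    LinearMap.BilinForm.sndSubFst_midpointDiscretization]
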